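/- arXiv:2412.06420 — 6 statements merged into one kernel-verified Lean document; each statement's English description precedes it below -/
import Mathlib

section
/- If an accuracy measure is strictly proper, then it is strictly truth-directed: for credences x, y in [0,1], if v < x < y or y < x < v (with v ∈ {0,1}), then acc_v(x) > acc_v(y). In particular, acc_1 is strictly increasing and acc_0 is strictly decreasing on [0,1]. -/
/-!
For credences `p < q`, strict propriety compares the two credences twice: under `p`, credence `p`
beats `q`, and under `q`, credence `q` beats `p`. Both comparisons are linear in the increments
`acc₁ q - acc₁ p` and `acc₀ q - acc₀ p`, and suitable nonnegative combinations of them isolate each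
increment, showing that the first is positive and the second negative.
-/

open Set

/-- The expected accuracy `Exp_p(acc)(x)` of credence `x` under probability `p`. -/
def expectedAccuracy (acc0 acc1 : ℝ → ℝ) (p x : ℝ) : ℝ :=
  p * acc1 x + (1 - p) * acc0 x

def StrictlyProper (acc0 acc1 : ℝ → ℝ) : Prop :=
  ∀ p ∈ Icc (0 : ℝ) 1, ∀ x ∈ Icc (0 : ℝ) 1, x ≠ p →
    expectedAccuracy acc0 acc1 p x < expectedAccuracy acc0 acc1 p p

namespace StrictlyProper

variable {acc0 acc1 : ℝ → ℝ} (h : StrictlyProper acc0 acc1)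
include h

theorem strictMonoOn : StrictMonoOn acc1 (Icc 0 1) := by
  intro p hp q hq hpq
  have hp_wins := h p hp q hq hpq.ne'
  have hq_wins := h q hq p hp hpq.ne
  unfold expectedAccuracy at hp_wins hq_wins
  -- `(q - p) (acc₁ q - acc₁ p)` is the combination `(1 - p)` · (q wins) `+ (1 - q)` · (p wins).
  have : 0 < (q - p) * (acc1 q - acc1 p) := by
    nlinarith [mul_pos (sub_pos.2 (hpq.trans_le hq.2)) (sub_pos.2 hq_wins),
      mul_nonneg (sub_nonneg.2 hq.2) (sub_pos.2 hp_wins).le]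
  linarith [pos_of_mul_pos_right this (sub_pos.2 hpq).le]

theorem strictAntiOn : StrictAntiOn acc0 (Icc 0 1) := by
  intro p hp q hq hpq
  have hp_wins := h p hp q hq hpq.ne'
  have hq_wins := h q hq p hp hpq.ne
  unfold expectedAccuracy at hp_wins hq_wins
  -- `(q - p) (acc₀ p - acc₀ q)` is the combination `p` · (q wins) `+ q` · (p wins).
  have : 0 < (q - p) * (acc0 p - acc0 q) := by
    nlinarith [mul_nonneg hp.1 (sub_pos.2 hq_wins).le,
      mul_pos (hp.1.trans_lt hpq) (sub_pos.2 hp_wins)]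
  linarith [pos_of_mul_pos_right this (sub_pos.2 hpq).le]

end StrictlyProper

/-- Strict propriety entails strict truth-directedness. -/
theorem strictly_proper_implies_truth_directed
    (acc0 acc1 : ℝ → ℝ)
    (hprop : ∀ p ∈ Set.Icc (0:ℝ) 1, ∀ x ∈ Set.Icc (0:ℝ) 1, x ≠ p →
      p * acc1 x + (1 - p) * acc0 x < p * acc1 p + (1 - p) * acc0 p) :
    (∀ x ∈ Set.Icc (0:ℝ) 1, ∀ y ∈ Set.Icc (0:ℝ) 1,
      (0 < x ∧ x < y) → acc0 x > acc0 y) ∧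
    (∀ x ∈ Set.Icc (0:ℝ) 1, ∀ y ∈ Set.Icc (0:ℝ) 1,
      (y < x ∧ x < 1) → acc1 x > acc1 y) ∧
    StrictMonoOn acc1 (Set.Icc (0:ℝ) 1) ∧
    StrictAntiOn acc0 (Set.Icc (0:ℝ) 1) := by
  have hproper : StrictlyProper acc0 acc1 := hprop
  exact ⟨fun _ hx _ hy hxy => hproper.strictAntiOn hx hy hxy.2,
    fun _ hx _ hy hxy => hproper.strictMonoOn hy hx hxy.1,
    hproper.strictMonoOn, hproper.strictAntiOn⟩
end

section
/- If there exists a nonnegative continuous function m : [0,1] → ℝ such that acc_1(x) = acc_1(1) - ∫_x^1 (1-t)·m(t) dt and acc_0(x) = acc_0(0) - ∫_0^x t·m(t) dt for all x ∈ [0,1], then acc is proper: for every p ∈ [0,1], Exp_p(acc)(x) := p·acc_1(x) + (1-p)·acc_0(x) is maximised at x = p. If moreover m is strictly positive, the maximum is unique (strict propriety). -/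
/-! Subtracting the two integral representations at `x` and at `p` gives
`Exp_p(acc)(x) - Exp_p(acc)(p) = -∫_p^x (t - p) m(t) dt`, because `p (1 - t) - (1 - p) t = p - t`.
The integrand `(t - p) m(t)` has the sign of `x - p` between `p` and `x`, so the oriented integral
is nonnegative, and positive when `m > 0` and `x ≠ p`. -/

open Set intervalIntegral

lemma integral_sub_mul_nonneg {m : ℝ → ℝ} {p x : ℝ} (hm : ∀ t ∈ uIcc p x, 0 ≤ m t) :
    0 ≤ ∫ t in p..x, (t - p) * m t := by
  rcases le_total p x with hpx | hxp
  · refine integral_nonneg hpx fun t ht ↦ mul_nonneg (by linarith [ht.1]) (hm t ?_)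
    exact Icc_subset_uIcc ht
  · rw [integral_symm, ← integral_neg]
    refine integral_nonneg hxp fun t ht ↦ ?_
    have hmt := hm t (Icc_subset_uIcc' ht)
    nlinarith [ht.2]

lemma integral_sub_mul_pos {m : ℝ → ℝ} {p x : ℝ} (hm_cont : ContinuousOn m (uIcc p x))
    (hm : ∀ t ∈ uIcc p x, 0 < m t) (hxp : x ≠ p) :
    0 < ∫ t in p..x, (t - p) * m t := by
  have hint : IntervalIntegrable (fun t ↦ (t - p) * m t) MeasureTheory.volume p x :=
    ((continuousOn_id.sub continuousOn_const).mul hm_cont).intervalIntegrable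
  rcases hxp.lt_or_gt with hxp | hpx
  · rw [integral_symm, ← integral_neg]
    refine intervalIntegral_pos_of_pos_on hint.symm.neg (fun t ht ↦ ?_) hxp
    have hmt := hm t (Ioo_subset_Icc_self.trans Icc_subset_uIcc' ht)
    nlinarith [ht.2]
  · refine intervalIntegral_pos_of_pos_on hint (fun t ht ↦ ?_) hpx
    exact mul_pos (by linarith [ht.1]) (hm t (Ioo_subset_Icc_self.trans Icc_subset_uIcc ht))

lemma expected_score_sub_eq_neg_integral {acc0 acc1 m : ℝ → ℝ}
    (hm : IntervalIntegrable m MeasureTheory.volume 0 1)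
    (h1 : ∀ x ∈ Icc (0:ℝ) 1, acc1 x = acc1 1 - ∫ t in x..(1:ℝ), (1 - t) * m t)
    (h0 : ∀ x ∈ Icc (0:ℝ) 1, acc0 x = acc0 0 - ∫ t in (0:ℝ)..x, t * m t)
    {p x : ℝ} (hp : p ∈ Icc (0:ℝ) 1) (hx : x ∈ Icc (0:ℝ) 1) :
    p * acc1 x + (1 - p) * acc0 x - (p * acc1 p + (1 - p) * acc0 p) =
      -∫ t in p..x, (t - p) * m t := by
  have hint : ∀ {g : ℝ → ℝ} {a b : ℝ}, Continuous g → a ∈ Icc (0:ℝ) 1 → b ∈ Icc (0:ℝ) 1 →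
      IntervalIntegrable (fun t ↦ g t * m t) MeasureTheory.volume a b := fun hg ha hb ↦
    (hm.mono_set (by simpa [uIcc_of_le zero_le_one] using uIcc_subset_Icc ha hb)).continuousOn_mul
      hg.continuousOn
  have h0mem : (0:ℝ) ∈ Icc (0:ℝ) 1 := ⟨le_rfl, zero_le_one⟩
  have h1mem : (1:ℝ) ∈ Icc (0:ℝ) 1 := ⟨zero_le_one, le_rfl⟩
  have hint1 := fun {a b : ℝ} ↦ @hint (fun t ↦ 1 - t) a b (by fun_prop)
  have hint0 := fun {a b : ℝ} ↦ @hint (fun t ↦ t) a b continuous_id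
  have hacc1 : acc1 x - acc1 p = ∫ t in p..x, (1 - t) * m t := by
    rw [h1 x hx, h1 p hp, ← integral_add_adjacent_intervals (hint1 hp hx) (hint1 hx h1mem)]
    ring
  have hacc0 : acc0 x - acc0 p = -∫ t in p..x, t * m t := by
    rw [h0 x hx, h0 p hp, ← integral_add_adjacent_intervals (hint0 h0mem hp) (hint0 hp hx)]
    ring
  have hcomb : p * (∫ t in p..x, (1 - t) * m t) - (1 - p) * ∫ t in p..x, t * m t =
      -∫ t in p..x, (t - p) * m t := by
    rw [← integral_const_mul, ← integral_const_mul,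
      ← integral_sub ((hint1 hp hx).const_mul p) ((hint0 hp hx).const_mul (1 - p)), ← integral_neg]
    congr 1 with t
    ring
  linear_combination p * hacc1 + (1 - p) * hacc0 + hcomb

/-- The Schervish integral form entails (strict) propriety. -/
theorem schervish_form_implies_proper
    (acc0 acc1 m : ℝ → ℝ)
    (hm_cont : ContinuousOn m (Set.Icc (0:ℝ) 1))
    (hm_nonneg : ∀ t ∈ Set.Icc (0:ℝ) 1, 0 ≤ m t)
    (h1 : ∀ x ∈ Set.Icc (0:ℝ) 1, acc1 x = acc1 1 - ∫ t in x..(1:ℝ), (1 - t) * m t)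
    (h0 : ∀ x ∈ Set.Icc (0:ℝ) 1, acc0 x = acc0 0 - ∫ t in (0:ℝ)..x, t * m t) :
    (∀ p ∈ Set.Icc (0:ℝ) 1, ∀ x ∈ Set.Icc (0:ℝ) 1,
      p * acc1 x + (1 - p) * acc0 x ≤ p * acc1 p + (1 - p) * acc0 p) ∧
    ((∀ t ∈ Set.Icc (0:ℝ) 1, 0 < m t) →
      ∀ p ∈ Set.Icc (0:ℝ) 1, ∀ x ∈ Set.Icc (0:ℝ) 1, x ≠ p →
        p * acc1 x + (1 - p) * acc0 x < p * acc1 p + (1 - p) * acc0 p) := by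
  have hm_int : IntervalIntegrable m MeasureTheory.volume 0 1 :=
    hm_cont.intervalIntegrable_of_Icc zero_le_one
  refine ⟨fun p hp x hx ↦ ?_, fun hm_pos p hp x hx hxp ↦ ?_⟩
  · have := expected_score_sub_eq_neg_integral hm_int h1 h0 hp hx
    have := integral_sub_mul_nonneg fun t ht ↦ hm_nonneg t (uIcc_subset_Icc hp hx ht)
    linarith
  · have := expected_score_sub_eq_neg_integral hm_int h1 h0 hp hx
    have := integral_sub_mul_pos (hm_cont.mono (uIcc_subset_Icc hp hx))
      (fun t ht ↦ hm_pos t (uIcc_subset_Icc hp hx ht)) hxp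
    linarith
end

section
/- Let φ : ℝ → ℝ be convex and differentiable, and define acc_v(x) := φ(x) + (v - x)·φ'(x) for v ∈ {0,1} and x ∈ [0,1]. Then acc is proper: for every p ∈ [0,1], x ↦ p·acc_1(x) + (1-p)·acc_0(x) is maximised at x = p. If φ is strictly convex, the maximum is unique. -/
/-!
The expected accuracy `p · acc₁(x) + (1 - p) · acc₀(x)` is `φ x + (p - x) φ'(x)`, the value at `p`
of the tangent line to `φ` at `x`. By convexity this tangent line lies below `φ`, with equality at
the point of tangency `x = p`, and strictly below away from it when `φ` is strictly convex.
-/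

section TangentLine

variable {S : Set ℝ} {f : ℝ → ℝ} {x y : ℝ}

theorem ConvexOn.add_mul_deriv_le (hf : ConvexOn ℝ S f) (hx : x ∈ S) (hy : y ∈ S)
    (hfx : DifferentiableAt ℝ f x) : f x + (y - x) * deriv f x ≤ f y := by
  rcases lt_trichotomy x y with hxy | rfl | hyx
  · have h := hf.deriv_le_slope hx hy hxy hfx
    rw [slope_def_field, le_div_iff₀ (sub_pos.2 hxy)] at h
    linarith
  · simp
  · have h := hf.slope_le_deriv hy hx hyx hfx
    rw [slope_def_field, div_le_iff₀ (sub_pos.2 hyx)] at h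
    linarith

theorem StrictConvexOn.add_mul_deriv_lt (hf : StrictConvexOn ℝ S f) (hx : x ∈ S) (hy : y ∈ S)
    (hfx : DifferentiableAt ℝ f x) (hxy : x ≠ y) : f x + (y - x) * deriv f x < f y := by
  rcases hxy.lt_or_gt with hxy | hyx
  · have h := hf.deriv_lt_slope hx hy hxy hfx
    rw [slope_def_field, lt_div_iff₀ (sub_pos.2 hxy)] at h
    linarith
  · have h := hf.slope_lt_deriv hy hx hyx hfx
    rw [slope_def_field, div_lt_iff₀ (sub_pos.2 hyx)] at h
    linarith

end TangentLine

theorem expected_bregman_accuracy_eq (p a d x : ℝ) :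
    p * (a + (1 - x) * d) + (1 - p) * (a + (0 - x) * d) = a + (p - x) * d := by
  ring

/-- Accuracy measures defined from a convex differentiable function via the
Bregman form are proper, and strictly proper when the function is strictly convex. -/
theorem bregman_form_implies_proper
    (φ : ℝ → ℝ)
    (hconv : ConvexOn ℝ Set.univ φ)
    (hdiff : Differentiable ℝ φ) :
    (∀ p ∈ Set.Icc (0:ℝ) 1, ∀ x ∈ Set.Icc (0:ℝ) 1,
      p * (φ x + (1 - x) * deriv φ x) + (1 - p) * (φ x + (0 - x) * deriv φ x)
        ≤ p * (φ p + (1 - p) * deriv φ p) + (1 - p) * (φ p + (0 - p) * deriv φ p)) ∧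
    (StrictConvexOn ℝ Set.univ φ →
      ∀ p ∈ Set.Icc (0:ℝ) 1, ∀ x ∈ Set.Icc (0:ℝ) 1, x ≠ p →
        p * (φ x + (1 - x) * deriv φ x) + (1 - p) * (φ x + (0 - x) * deriv φ x)
          < p * (φ p + (1 - p) * deriv φ p) + (1 - p) * (φ p + (0 - p) * deriv φ p)) := by
  simp only [expected_bregman_accuracy_eq, sub_self, zero_mul, add_zero]
  refine ⟨fun p _ x _ ↦ ?_, fun hstrict p _ x _ hxp ↦ ?_⟩
  · exact hconv.add_mul_deriv_le trivial trivial (hdiff x)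
  · exact hstrict.add_mul_deriv_lt trivial trivial (hdiff x) hxp
end

section
/- (Propriety entails value-directedness.) Let V : Ω → ℝ with r, k ∈ range(V), r ≠ k, and let acc be strictly proper for V on finitely supported probabilities. Then for a, b, e between r and k with e ≤ b < a or a < b ≤ e, we have acc_e is strictly better at b than at a in the sense that Exp over the two-point distribution at e satisfies: moving the estimate from a toward e (to b) strictly increases accuracy, i.e., acc_e(b) > acc_e(a). -/
/-!
Restrict a strictly proper `acc` to the two-point distributions `p_t` putting weight `1 - t` on
`V = r` and `t` on `V = k`, whose mean is `(1 - t) r + t k`. Writing `A t`, `B t` for the accuracy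
at `r` and at `k` of the report `(1 - t) r + t k`, propriety at `p_u` against the report of `p_v`
and vice versa, added together, show that `B - A` is increasing in the weight; fed back into one
of the two inequalities this makes `A` strictly decreasing on `[0, 1]`. Moving an estimate towards
`r` lowers its weight, hence raises its accuracy at `r`; the case of `k` is symmetric.
-/

open Set

variable {Ω : Type*}

def IsStrictlyProper [Fintype Ω] (V : Ω → ℝ) (acc : ℝ → ℝ → ℝ) : Prop :=
  ∀ p : Ω → ℝ, (∀ ω, 0 ≤ p ω) → ∑ ω, p ω = 1 → ∀ x : ℝ, x ≠ ∑ ω, p ω * V ω →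
    ∑ ω, p ω * acc (V ω) x < ∑ ω, p ω * acc (V ω) (∑ ω, p ω * V ω)

lemma abs_sub_lt_abs_sub_of_between {a b e : ℝ} (h : (e ≤ b ∧ b < a) ∨ (a < b ∧ b ≤ e)) :
    |b - e| < |a - e| := by
  rcases h with ⟨heb, hba⟩ | ⟨hab, hbe⟩
  · rw [abs_of_nonneg (sub_nonneg.mpr heb), abs_of_pos (by linarith)]
    linarith
  · rw [abs_of_nonpos (sub_nonpos.mpr hbe), abs_of_neg (by linarith)]
    linarith

lemma strictAntiOn_of_binary_proper {A B : ℝ → ℝ}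
    (h : ∀ s ∈ Icc (0 : ℝ) 1, ∀ t ∈ Icc (0 : ℝ) 1, t ≠ s →
      (1 - s) * A t + s * B t < (1 - s) * A s + s * B s) :
    StrictAntiOn A (Icc 0 1) := by
  intro u hu v hv huv
  have hat_v := h v hv u hu huv.ne
  have hat_u := h u hu v hv huv.ne'
  have hsum : 0 < (v - u) * ((B v - A v) - (B u - A u)) := by linarith
  have hdiff : 0 ≤ (B v - A v) - (B u - A u) := (pos_of_mul_pos_right hsum (sub_pos.2 huv).le).le
  linarith [mul_nonneg hu.1 hdiff]

def twoPoint [DecidableEq Ω] (ω₀ ω₁ : Ω) (t : ℝ) : Ω → ℝ :=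
  Pi.single ω₀ (1 - t) + Pi.single ω₁ t

section twoPoint

variable [DecidableEq Ω]

lemma sum_twoPoint_mul [Fintype Ω] (ω₀ ω₁ : Ω) (t : ℝ) (f : Ω → ℝ) :
    ∑ ω, twoPoint ω₀ ω₁ t ω * f ω = (1 - t) * f ω₀ + t * f ω₁ := by
  simp [twoPoint, add_mul, Finset.sum_add_distrib, Pi.single_apply]

lemma sum_twoPoint [Fintype Ω] (ω₀ ω₁ : Ω) (t : ℝ) : ∑ ω, twoPoint ω₀ ω₁ t ω = 1 := by
  simpa using sum_twoPoint_mul ω₀ ω₁ t 1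

lemma twoPoint_nonneg (ω₀ ω₁ : Ω) {t : ℝ} (ht : t ∈ Icc (0 : ℝ) 1) (ω : Ω) :
    0 ≤ twoPoint ω₀ ω₁ t ω := by
  simp only [twoPoint, Pi.add_apply, Pi.single_apply]
  split_ifs <;> linarith [ht.1, ht.2]

end twoPoint

namespace IsStrictlyProper

variable [Fintype Ω] {V : Ω → ℝ} {acc : ℝ → ℝ → ℝ}

lemma twoPoint_lt (hacc : IsStrictlyProper V acc) (ω₀ ω₁ : Ω) {s : ℝ} (hs : s ∈ Icc (0 : ℝ) 1)
    {x : ℝ} (hx : x ≠ (1 - s) * V ω₀ + s * V ω₁) :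
    (1 - s) * acc (V ω₀) x + s * acc (V ω₁) x <
      (1 - s) * acc (V ω₀) ((1 - s) * V ω₀ + s * V ω₁) +
        s * acc (V ω₁) ((1 - s) * V ω₀ + s * V ω₁) := by
  classical
  simpa only [sum_twoPoint_mul] using
    hacc (twoPoint ω₀ ω₁ s) (twoPoint_nonneg ω₀ ω₁ hs) (sum_twoPoint ω₀ ω₁ s) x
      (by rwa [sum_twoPoint_mul])

lemma acc_lt_of_between (hacc : IsStrictlyProper V acc) {ω₀ ω₁ : Ω} (hV : V ω₀ ≠ V ω₁)
    {a b : ℝ} (ha : a ∈ uIcc (V ω₀) (V ω₁)) (hb : b ∈ uIcc (V ω₀) (V ω₁))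
    (hab : (V ω₀ ≤ b ∧ b < a) ∨ (a < b ∧ b ≤ V ω₀)) :
    acc (V ω₀) a < acc (V ω₀) b := by
  have hanti : StrictAntiOn (fun θ : ℝ => acc (V ω₀) ((1 - θ) * V ω₀ + θ * V ω₁)) (Icc 0 1) :=
    strictAntiOn_of_binary_proper fun s hs t _ hts => hacc.twoPoint_lt ω₀ ω₁ hs fun h =>
      hts (mul_right_cancel₀ (sub_ne_zero.mpr hV.symm) (by linarith))
  rw [← segment_eq_uIcc, segment_eq_image] at ha hb
  obtain ⟨u, hu, rfl⟩ := ha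
  obtain ⟨v, hv, rfl⟩ := hb
  simp only [smul_eq_mul] at hab ⊢
  have hdist : ∀ θ ∈ Icc (0 : ℝ) 1, |(1 - θ) * V ω₀ + θ * V ω₁ - V ω₀| = θ * |V ω₁ - V ω₀| := by
    intro θ hθ
    rw [show (1 - θ) * V ω₀ + θ * V ω₁ - V ω₀ = θ * (V ω₁ - V ω₀) by ring, abs_mul,
      abs_of_nonneg hθ.1]
  have hvu : v < u := by
    have := abs_sub_lt_abs_sub_of_between hab
    rw [hdist u hu, hdist v hv] at this
    exact lt_of_mul_lt_mul_right this (abs_nonneg _)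
  exact hanti hv hu hvu

end IsStrictlyProper

/-- Strict propriety for estimates entails strict value-directedness. -/
theorem proper_implies_value_directed
    (Ω : Type) [Fintype Ω] (V : Ω → ℝ) (acc : ℝ → ℝ → ℝ)
    (r k : ℝ) (hr : r ∈ Set.range V) (hk : k ∈ Set.range V) (hrk : r ≠ k)
    (hprop : ∀ p : Ω → ℝ, (∀ ω, 0 ≤ p ω) → (∑ ω, p ω = 1) →
      ∀ x : ℝ, x ≠ ∑ ω, p ω * V ω →
        ∑ ω, p ω * acc (V ω) x < ∑ ω, p ω * acc (V ω) (∑ ω, p ω * V ω)) :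
    ∀ e ∈ ({r, k} : Set ℝ), ∀ a ∈ Set.uIcc r k, ∀ b ∈ Set.uIcc r k,
      ((e ≤ b ∧ b < a) ∨ (a < b ∧ b ≤ e)) → acc e b > acc e a := by
  obtain ⟨ωr, rfl⟩ := hr
  obtain ⟨ωk, rfl⟩ := hk
  rintro e (rfl | rfl) a ha b hb hab
  · exact IsStrictlyProper.acc_lt_of_between hprop hrk ha hb hab
  · rw [Set.uIcc_comm] at ha hb
    exact IsStrictlyProper.acc_lt_of_between hprop hrk.symm ha hb hab
end

section
/- (Two-point first-order condition.) Let acc_k, acc_r : ℝ → ℝ be differentiable with k < r, and suppose for every t ∈ [k, r] the function x ↦ ((t-k)/(r-k))·acc_r(x) + ((r-t)/(r-k))·acc_k(x) is maximised (over [k,r]) at x = t. Then for all t ∈ (k, r): (t-k)·acc_r'(t) + (r-t)·acc_k'(t) = 0, equivalently acc_r'(t)/(r - t) = acc_k'(t)/(k - t). -/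
theorem IsLocalMax.const_mul_deriv_add_const_mul_deriv_eq_zero {f g : ℝ → ℝ} {a b t : ℝ}
    (hf : DifferentiableAt ℝ f t) (hg : DifferentiableAt ℝ g t)
    (h : IsLocalMax (fun x => a * f x + b * g x) t) :
    a * deriv f t + b * deriv g t = 0 :=
  h.hasDerivAt_eq_zero ((hf.hasDerivAt.const_mul a).add (hg.hasDerivAt.const_mul b))

theorem two_point_first_order_condition_general
    (acck accr : ℝ → ℝ) (k r : ℝ)
    (hdk : Differentiable ℝ acck) (hdr : Differentiable ℝ accr)
    (hmax : ∀ t ∈ Set.Icc k r, ∀ x ∈ Set.Icc k r,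
      ((t - k) / (r - k)) * accr x + ((r - t) / (r - k)) * acck x
        ≤ ((t - k) / (r - k)) * accr t + ((r - t) / (r - k)) * acck t) :
    ∀ t ∈ Set.Ioo k r,
      (t - k) * deriv accr t + (r - t) * deriv acck t = 0 ∧
      deriv accr t / (r - t) = deriv acck t / (k - t) := by
  intro t ht
  have hlocal : IsLocalMax
      (fun x => (t - k) / (r - k) * accr x + (r - t) / (r - k) * acck x) t :=
    Filter.eventually_of_mem (Icc_mem_nhds ht.1 ht.2) (hmax t (Set.Ioo_subset_Icc_self ht))
  have hcrit := hlocal.const_mul_deriv_add_const_mul_deriv_eq_zero (hdr t) (hdk t)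
  have hrk : r - k ≠ 0 := by linarith [ht.1, ht.2]
  have hweighted : (t - k) * deriv accr t + (r - t) * deriv acck t = 0 := by
    rw [div_mul_eq_mul_div, div_mul_eq_mul_div, ← add_div, div_eq_zero_iff] at hcrit
    exact hcrit.resolve_right hrk
  refine ⟨hweighted, ?_⟩
  rw [div_eq_div_iff (sub_ne_zero.mpr ht.2.ne') (sub_ne_zero.mpr ht.1.ne)]
  linarith

/-- The two-point first-order condition. -/
theorem two_point_first_order_condition
    (acck accr : ℝ → ℝ) (k r : ℝ) (hkr : k < r)
    (hdk : Differentiable ℝ acck) (hdr : Differentiable ℝ accr)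
    (hmax : ∀ t ∈ Set.Icc k r, ∀ x ∈ Set.Icc k r,
      ((t - k) / (r - k)) * accr x + ((r - t) / (r - k)) * acck x
        ≤ ((t - k) / (r - k)) * accr t + ((r - t) / (r - k)) * acck t) :
    ∀ t ∈ Set.Ioo k r,
      (t - k) * deriv accr t + (r - t) * deriv acck t = 0 ∧
      deriv accr t / (r - t) = deriv acck t / (k - t) :=
  two_point_first_order_condition_general acck accr k r hdk hdr hmax
end

section
/- (Bregman characterisation for estimates, sufficiency.) Let φ : ℝ → ℝ be strictly convex and differentiable, and define acc_v(x) := acc_v(v) - [φ(v) - φ(x) - (v - x)·φ'(x)] for arbitrary fixed constants acc_v(v). Then acc is strictly proper for estimates: for every finite Ω, V : Ω → ℝ, and probability mass function p on Ω, the map x ↦ Σ_ω p(ω)·acc_{V(ω)}(x) is uniquely maximised at x = Σ_ω p(ω)·V(ω). -/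
/-!
Averaged over weights summing to one, the Bregman divergence from the points `V ω` to `x` splits
as the averaged divergence to the mean `μ` plus `d(μ, x)`, because the part of `d(V ω, x)` that is
affine in `V ω` averages to its value at `μ`. Hence the expected score at `x` falls short of the
one at `μ` by exactly `d(μ, x)`, which strict convexity makes positive for `x ≠ μ`.
-/

open Finset

noncomputable def bregmanDiv (φ : ℝ → ℝ) (p x : ℝ) : ℝ :=
  φ p - φ x - (p - x) * deriv φ x

theorem StrictConvexOn.bregmanDiv_pos {φ : ℝ → ℝ} {S : Set ℝ} (hφ : StrictConvexOn ℝ S φ)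
    {p x : ℝ} (hp : p ∈ S) (hx : x ∈ S) (hφx : DifferentiableAt ℝ φ x) (hpx : p ≠ x) :
    0 < bregmanDiv φ p x := by
  rw [bregmanDiv, sub_sub, sub_pos]
  rcases hpx.lt_or_gt with hlt | hgt
  · have hslope := hφ.slope_lt_deriv hp hx hlt hφx
    rw [slope_def_field, div_lt_iff₀ (sub_pos.2 hlt)] at hslope
    linarith
  · have hslope := hφ.deriv_lt_slope hx hp hgt hφx
    rw [slope_def_field, lt_div_iff₀ (sub_pos.2 hgt)] at hslope
    linarith

theorem sum_mul_bregmanDiv (φ : ℝ → ℝ) {ι : Type*} (s : Finset ι) (w V : ι → ℝ)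
    (hw : ∑ i ∈ s, w i = 1) (x : ℝ) :
    ∑ i ∈ s, w i * bregmanDiv φ (V i) x =
      ∑ i ∈ s, w i * bregmanDiv φ (V i) (∑ i ∈ s, w i * V i) +
        bregmanDiv φ (∑ i ∈ s, w i * V i) x := by
  have hsum (y : ℝ) : ∑ i ∈ s, w i * bregmanDiv φ (V i) y =
      ∑ i ∈ s, w i * φ (V i) - φ y - (∑ i ∈ s, w i * V i - y) * deriv φ y := by
    simp only [bregmanDiv, mul_sub, sub_mul, sum_sub_distrib, ← sum_mul, hw, ← mul_assoc, one_mul]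
  rw [hsum, hsum, bregmanDiv]
  ring

theorem bregman_form_strictly_proper_estimates_general
    (φ : ℝ → ℝ)
    (hconv : StrictConvexOn ℝ Set.univ φ)
    (hdiff : Differentiable ℝ φ)
    (c : ℝ → ℝ) (acc : ℝ → ℝ → ℝ)
    (hacc : ∀ v x : ℝ, acc v x = c v - (φ v - φ x - (v - x) * deriv φ x))
    (Ω : Type) [Fintype Ω] (V : Ω → ℝ) (p : Ω → ℝ)
    (hp1 : ∑ ω, p ω = 1) :
    ∀ x : ℝ, x ≠ ∑ ω, p ω * V ω →
      ∑ ω, p ω * acc (V ω) x < ∑ ω, p ω * acc (V ω) (∑ ω, p ω * V ω) := by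
  intro x hx
  have hsum (y : ℝ) : ∑ ω, p ω * acc (V ω) y =
      ∑ ω, p ω * c (V ω) - ∑ ω, p ω * bregmanDiv φ (V ω) y := by
    simp only [hacc, bregmanDiv, mul_sub, sum_sub_distrib]
  have hgap := hconv.bregmanDiv_pos (Set.mem_univ _) (Set.mem_univ x) (hdiff x) hx.symm
  rw [hsum, hsum, sum_mul_bregmanDiv φ univ p V hp1 x]
  linarith

/-- The Bregman form with strictly convex entropy is strictly proper for estimates. -/
theorem bregman_form_strictly_proper_estimates
    (φ : ℝ → ℝ)
    (hconv : StrictConvexOn ℝ Set.univ φ)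
    (hdiff : Differentiable ℝ φ)
    (c : ℝ → ℝ) (acc : ℝ → ℝ → ℝ)
    (hacc : ∀ v x : ℝ, acc v x = c v - (φ v - φ x - (v - x) * deriv φ x))
    (Ω : Type) [Fintype Ω] (V : Ω → ℝ) (p : Ω → ℝ)
    (hp : ∀ ω, 0 ≤ p ω) (hp1 : ∑ ω, p ω = 1) :
    ∀ x : ℝ, x ≠ ∑ ω, p ω * V ω →
      ∑ ω, p ω * acc (V ω) x < ∑ ω, p ω * acc (V ω) (∑ ω, p ω * V ω) :=
  bregman_form_strictly_proper_estimates_general φ hconv hdiff c acc hacc Ω V p hp1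
end
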